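/- arXiv:2501.09880 — 3 statements merged into one kernel-verified Lean document; each statement's English description precedes it below -/
import Mathlib

section
/- Let u : 𝕌 → (0, +∞) be a positive harmonic function on the open unit disc. Then for every z ∈ 𝕌, u(z)/u(0) ≥ ( (1+|z|²)/(1−|z|²) + (|∇u(0)|/u(0)) · |z|/(1−|z|²) )⁻¹. -/
/-!
Write `u = Re F` with `F` holomorphic on the disc and `F 0 = u 0 = a`, so that `|F' 0| = |∇u 0|`.
The Cayley transform `φ = (F - a) / (F + a)` maps the disc into itself, with `φ 0 = 0` and
`φ' 0 = F' 0 / (2a)`. Dieudonné's refinement of the Schwarz lemma (the Schwarz lemma applied to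
`φ w / w` followed by the disc automorphism moving `φ' 0` to the origin) gives
`|φ z| ≤ r (r + β) / (1 + β r)` for `r = |z|`, `β = |φ' 0|`, while inverting the Cayley transform
gives `Re F ≥ a (1 - |φ|) / (1 + |φ|)`. Combining the two bounds yields the estimate.
-/

open Complex Metric Set Filter InnerProductSpace
open scoped Topology ComplexConjugate

theorem InnerProductSpace.harmonicOnNhd_of_contDiffOn_of_partials {F : Type*}
    [NormedAddCommGroup F] [NormedSpace ℝ F] {u : ℂ → F} {s : Set ℂ} (hs : IsOpen s)
    (hreg : ContDiffOn ℝ 2 u s)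
    (hlap : ∀ z ∈ s, fderiv ℝ (fun w => fderiv ℝ u w 1) z 1 +
      fderiv ℝ (fun w => fderiv ℝ u w I) z I = 0) :
    HarmonicOnNhd u s := by
  intro x hx
  refine ⟨hreg.contDiffAt (hs.mem_nhds hx), ?_⟩
  filter_upwards [hs.mem_nhds hx] with z hz
  have hd : DifferentiableAt ℝ (fderiv ℝ u) z :=
    ((hreg.contDiffAt (hs.mem_nhds hz)).fderiv_right (m := 1) le_rfl).differentiableAt one_ne_zero
  simp only [laplacian_eq_iteratedFDeriv_complexPlane, Pi.zero_apply, iteratedFDeriv_two_apply]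
  rw [← hlap z hz]
  simp [fderiv_clm_apply hd (differentiableAt_const _)]

theorem InnerProductSpace.HarmonicOnNhd.exists_differentiableOn_ball_re_eq_with_val_at_center
    {u : ℂ → ℝ} {c : ℂ} {R : ℝ} (hu : HarmonicOnNhd u (ball c R)) :
    ∃ F : ℂ → ℂ, DifferentiableOn ℂ F (ball c R) ∧ (∀ z ∈ ball c R, (F z).re = u z) ∧
      F c = u c := by
  obtain ⟨F, hFa, hFu⟩ := hu.exists_analyticOnNhd_ball_re_eq
  refine ⟨fun z => F z - F c + u c, (hFa.differentiableOn.sub_const _).add_const _,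
    fun z hz => ?_, by simp⟩
  have hc : c ∈ ball c R := mem_ball_self (pos_of_mem_ball hz)
  simp [hFu hz, hFu hc]

theorem HasDerivAt.hasGradientAt_of_re_eventuallyEq {F : ℂ → ℂ} {u : ℂ → ℝ} {c x : ℂ}
    (hF : HasDerivAt F c x) (hu : (fun z => (F z).re) =ᶠ[𝓝 x] u) :
    HasGradientAt u (conj c) x := by
  rw [hasGradientAt_iff_hasFDerivAt]
  refine ((reCLM.hasFDerivAt.comp x (hF.hasFDerivAt.restrictScalars ℝ)).congr_of_eventuallyEq
    hu.symm).congr_fderiv ?_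
  ext v
  simp [Complex.inner, mul_comm]

theorem mul_one_sub_sq_le_mul_of_cayley_bounds {a x t r β : ℝ} (ha : 0 < a) (ht : 0 ≤ t)
    (hr : 0 ≤ r) (hβ : 0 ≤ β) (hschwarz : t * (1 + β * r) ≤ r * (β + r))
    (hcayley : a * (1 - t) ≤ x * (1 + t)) :
    a * (1 - r ^ 2) ≤ x * (1 + r ^ 2 + 2 * β * r) := by
  have hratio : (1 - r ^ 2) * (1 + t) ≤ (1 - t) * (1 + r ^ 2 + 2 * β * r) := by
    nlinarith
  have hprod : a * (1 - r ^ 2) * (1 + t) ≤ x * (1 + r ^ 2 + 2 * β * r) * (1 + t) := by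
    nlinarith [mul_le_mul_of_nonneg_left hratio ha.le,
      mul_le_mul_of_nonneg_right hcayley (by positivity : 0 ≤ 1 + r ^ 2 + 2 * β * r)]
  exact le_of_mul_le_mul_right hprod (by positivity)

namespace Complex

theorem normSq_one_sub_conj_mul_sub_normSq_sub (p q : ℂ) :
    normSq (1 - conj p * q) - normSq (p - q) = (1 - normSq p) * (1 - normSq q) := by
  simp only [normSq_apply, sub_re, sub_im, mul_re, mul_im, conj_re, conj_im, one_re, one_im]
  ring

theorem norm_sub_le_norm_one_sub_conj_mul {p q : ℂ} (hp : ‖p‖ ≤ 1) (hq : ‖q‖ ≤ 1) :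
    ‖p - q‖ ≤ ‖1 - conj p * q‖ := by
  have hp' : normSq p ≤ 1 := by rw [← Complex.sq_norm]; nlinarith [norm_nonneg p]
  have hq' : normSq q ≤ 1 := by rw [← Complex.sq_norm]; nlinarith [norm_nonneg q]
  have h := normSq_one_sub_conj_mul_sub_normSq_sub p q
  rw [← sq_le_sq₀ (norm_nonneg _) (norm_nonneg _), Complex.sq_norm, Complex.sq_norm]
  nlinarith [mul_nonneg (sub_nonneg.2 hp') (sub_nonneg.2 hq')]

theorem norm_mul_one_add_le_of_norm_sub_le {b p : ℂ} {s : ℝ} (hb : ‖b‖ ≤ 1) (hp : ‖p‖ ≤ 1)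
    (hs₀ : 0 ≤ s) (hs₁ : s ≤ 1) (h : ‖b - p‖ ≤ s * ‖1 - conj b * p‖) :
    ‖p‖ * (1 + ‖b‖ * s) ≤ ‖b‖ + s := by
  set T := (conj b * p).re
  have hT : T ≤ ‖b‖ * ‖p‖ := (re_le_norm _).trans_eq (by rw [norm_mul, norm_conj])
  have hsq : ‖b‖ ^ 2 + ‖p‖ ^ 2 - 2 * T ≤ s ^ 2 * (1 + ‖b‖ ^ 2 * ‖p‖ ^ 2 - 2 * T) := by
    have h2 := pow_le_pow_left₀ (norm_nonneg _) h 2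
    have hexp₁ : ‖b - p‖ ^ 2 = ‖b‖ ^ 2 + ‖p‖ ^ 2 - 2 * T := by
      simp only [T, ← normSq_eq_norm_sq, normSq_apply, sub_re, sub_im, mul_re, conj_re, conj_im]
      ring
    have hexp₂ : ‖1 - conj b * p‖ ^ 2 = 1 + ‖b‖ ^ 2 * ‖p‖ ^ 2 - 2 * T := by
      simp only [T, ← normSq_eq_norm_sq, normSq_apply, sub_re, sub_im, mul_re, mul_im,
        conj_re, conj_im, one_re, one_im]
      ring
    rwa [mul_pow, hexp₁, hexp₂] at h2
  have hbp : 0 ≤ 1 - ‖b‖ * ‖p‖ := by nlinarith [norm_nonneg b, norm_nonneg p]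
  -- As `s ≤ 1`, increasing `T` to `‖b‖ * ‖p‖` preserves `hsq`, which then reads:
  have key : (‖p‖ - ‖b‖) ^ 2 ≤ (s * (1 - ‖b‖ * ‖p‖)) ^ 2 := by
    nlinarith [mul_nonneg (sub_nonneg.2 (pow_le_one₀ hs₀ hs₁ : s ^ 2 ≤ 1)) (sub_nonneg.2 hT)]
  nlinarith [(abs_le_of_sq_le_sq' key (mul_nonneg hs₀ hbp)).2]

theorem norm_mul_one_add_le_of_mapsTo_closedBall {ψ : ℂ → ℂ}
    (hψ : DifferentiableOn ℂ ψ (ball 0 1)) (hmaps : MapsTo ψ (ball 0 1) (closedBall 0 1))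
    {w : ℂ} (hw : w ∈ ball 0 1) :
    ‖ψ w‖ * (1 + ‖ψ 0‖ * ‖w‖) ≤ ‖ψ 0‖ + ‖w‖ := by
  have hle : ∀ v ∈ ball (0 : ℂ) 1, ‖ψ v‖ ≤ 1 := fun v hv => mem_closedBall_zero_iff.mp (hmaps hv)
  set b := ψ 0
  have hb : ‖b‖ ≤ 1 := hle 0 (mem_ball_self one_pos)
  have hw₁ : ‖w‖ < 1 := mem_ball_zero_iff.mp hw
  obtain hb | hb := hb.eq_or_lt
  · rw [hb]
    nlinarith [hle w hw, norm_nonneg w]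
  -- `χ` is `ψ` followed by the disc automorphism exchanging `b` and `0`.
  set χ : ℂ → ℂ := fun v => (b - ψ v) / (1 - conj b * ψ v)
  have hden : ∀ v ∈ ball (0 : ℂ) 1, 1 - conj b * ψ v ≠ 0 := by
    intro v hv h
    have : ‖conj b * ψ v‖ < 1 := by
      rw [norm_mul, norm_conj]
      nlinarith [hle v hv, norm_nonneg b, norm_nonneg (ψ v)]
    rw [← sub_eq_zero.mp h, norm_one] at this
    exact this.false
  have hχd : DifferentiableOn ℂ χ (ball 0 1) :=
    ((differentiableOn_const b).sub hψ).div
      ((differentiableOn_const 1).sub ((differentiableOn_const _).mul hψ)) hden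
  have hχmaps : MapsTo χ (ball 0 1) (closedBall 0 1) := by
    intro v hv
    rw [mem_closedBall_zero_iff, norm_div, div_le_one (norm_pos_iff.mpr (hden v hv))]
    exact norm_sub_le_norm_one_sub_conj_mul hb.le (hle v hv)
  have hχw : ‖χ w‖ ≤ ‖w‖ :=
    norm_le_norm_of_mapsTo_ball hχd hχmaps (by simp [χ, b]) hw₁
  rw [norm_div, div_le_iff₀ (norm_pos_iff.mpr (hden w hw))] at hχw
  exact norm_mul_one_add_le_of_norm_sub_le hb.le (hle w hw) (norm_nonneg w) hw₁.le hχw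

theorem norm_mul_one_add_le_of_mapsTo_closedBall_of_map_zero {Φ : ℂ → ℂ}
    (hΦ : DifferentiableOn ℂ Φ (ball 0 1)) (hmaps : MapsTo Φ (ball 0 1) (closedBall 0 1))
    (h₀ : Φ 0 = 0) {w : ℂ} (hw : w ∈ ball 0 1) :
    ‖Φ w‖ * (1 + ‖deriv Φ 0‖ * ‖w‖) ≤ ‖w‖ * (‖deriv Φ 0‖ + ‖w‖) := by
  have hψd : DifferentiableOn ℂ (dslope Φ 0) (ball 0 1) :=
    (differentiableOn_dslope (ball_mem_nhds _ one_pos)).mpr hΦ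
  have hψmaps : MapsTo (dslope Φ 0) (ball 0 1) (closedBall 0 1) := fun v hv => by
    simpa using norm_dslope_le_div_of_mapsTo_ball hΦ (by rwa [h₀]) hv
  have hΦw : Φ w = w * dslope Φ 0 w := by simpa [h₀] using (sub_smul_dslope Φ 0 w).symm
  have h := norm_mul_one_add_le_of_mapsTo_closedBall hψd hψmaps hw
  rw [dslope_same] at h
  rw [hΦw, norm_mul, mul_assoc]
  exact mul_le_mul_of_nonneg_left h (norm_nonneg w)

theorem norm_sub_ofReal_lt_norm_add_ofReal {a : ℝ} {w : ℂ} (ha : 0 < a) (hw : 0 < w.re) :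
    ‖w - a‖ < ‖w + a‖ := by
  rw [← sq_lt_sq₀ (norm_nonneg _) (norm_nonneg _), Complex.sq_norm, Complex.sq_norm]
  simp only [normSq_apply, sub_re, sub_im, add_re, add_im, ofReal_re, ofReal_im]
  nlinarith

theorem mul_one_sub_norm_le_re_mul_one_add_norm {a : ℝ} {w : ℂ} (ha : 0 < a) (hw : 0 < w.re) :
    a * (1 - ‖(w - a) / (w + a)‖) ≤ w.re * (1 + ‖(w - a) / (w + a)‖) := by
  have hpos : 0 < ‖w + a‖ := (norm_nonneg _).trans_lt (norm_sub_ofReal_lt_norm_add_ofReal ha hw)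
  have hdiff : (‖w + a‖ - ‖w - a‖) * (‖w + a‖ + ‖w - a‖) = 4 * a * w.re := by
    rw [mul_comm, ← sq_sub_sq, Complex.sq_norm, Complex.sq_norm]
    simp only [normSq_apply, sub_re, sub_im, add_re, add_im, ofReal_re, ofReal_im]
    ring
  have htri : 2 * a ≤ ‖w + a‖ + ‖w - a‖ := by
    simpa [← two_mul, abs_of_pos ha] using norm_sub_le (w + a) (w - a)
  rw [norm_div, one_sub_div hpos.ne', one_add_div hpos.ne', ← mul_div_assoc, ← mul_div_assoc,
    div_le_div_iff_of_pos_right hpos]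
  refine le_of_mul_le_mul_right ?_ (by positivity : 0 < ‖w + a‖ + ‖w - a‖)
  rw [mul_assoc, hdiff]
  nlinarith [mul_le_mul_of_nonneg_left (pow_le_pow_left₀ (by positivity) htri 2) hw.le]

theorem mul_one_sub_sq_le_re_mul_of_forall_re_pos {F : ℂ → ℂ} {a : ℝ}
    (hF : DifferentiableOn ℂ F (ball 0 1)) (hre : ∀ z ∈ ball (0 : ℂ) 1, 0 < (F z).re)
    (hF₀ : F 0 = a) {z : ℂ} (hz : z ∈ ball 0 1) :
    a * (1 - ‖z‖ ^ 2) ≤ (F z).re * (1 + ‖z‖ ^ 2 + ‖deriv F 0‖ / a * ‖z‖) := by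
  have h₀ : (0 : ℂ) ∈ ball 0 1 := mem_ball_self one_pos
  have ha : 0 < a := by simpa [hF₀] using hre 0 h₀
  have hden : ∀ w ∈ ball (0 : ℂ) 1, F w + a ≠ 0 := fun w hw =>
    norm_pos_iff.mp ((norm_nonneg _).trans_lt (norm_sub_ofReal_lt_norm_add_ofReal ha (hre w hw)))
  set φ : ℂ → ℂ := fun w => (F w - a) / (F w + a)
  have hφd : DifferentiableOn ℂ φ (ball 0 1) :=
    (hF.sub_const _).div (hF.add_const _) hden
  have hφmaps : MapsTo φ (ball 0 1) (closedBall 0 1) := fun w hw => by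
    rw [mem_closedBall_zero_iff, norm_div, div_le_one (norm_pos_iff.mpr (hden w hw))]
    exact (norm_sub_ofReal_lt_norm_add_ofReal ha (hre w hw)).le
  have hφ' : HasDerivAt φ (deriv F 0 / (2 * a)) 0 := by
    have hFd := (hF.differentiableAt (isOpen_ball.mem_nhds h₀)).hasDerivAt
    refine ((hFd.sub_const (a : ℂ)).div (hFd.add_const (a : ℂ)) (hden 0 h₀)).congr_deriv ?_
    have : (a : ℂ) ≠ 0 := ofReal_ne_zero.mpr ha.ne'
    rw [hF₀]
    field_simp
    ring
  have hβ : ‖deriv φ 0‖ = ‖deriv F 0‖ / (2 * a) := by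
    rw [hφ'.deriv, norm_div, norm_mul, Complex.norm_ofNat, Complex.norm_real,
      Real.norm_of_nonneg ha.le]
  have hschwarz := norm_mul_one_add_le_of_mapsTo_closedBall_of_map_zero hφd hφmaps
    (by simp [φ, hF₀]) hz
  have hcayley : a * (1 - ‖φ z‖) ≤ (F z).re * (1 + ‖φ z‖) :=
    mul_one_sub_norm_le_re_mul_one_add_norm ha (hre z hz)
  rw [hβ] at hschwarz
  have h2β : ‖deriv F 0‖ / a = 2 * (‖deriv F 0‖ / (2 * a)) := by field_simp
  rw [h2β]
  exact mul_one_sub_sq_le_mul_of_cayley_bounds ha (norm_nonneg _) (norm_nonneg _) (by positivity)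
    hschwarz hcayley

end Complex

/-- Strengthened Harnack inequality (lower bound) for positive harmonic
functions on the unit disc. -/
theorem strong_harnack_lower (u : ℂ → ℝ)
(hreg : ContDiffOn ℝ 2 u (Metric.ball (0:ℂ) 1))
    (hlap : ∀ z ∈ Metric.ball (0:ℂ) 1,
      fderiv ℝ (fun w => fderiv ℝ u w 1) z 1 +
      fderiv ℝ (fun w => fderiv ℝ u w Complex.I) z Complex.I = 0)
    (hpos : ∀ z ∈ Metric.ball (0:ℂ) 1, 0 < u z)
    (z : ℂ) (hz : z ∈ Metric.ball (0:ℂ) 1) :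
    ((1 + ‖z‖ ^ 2) / (1 - ‖z‖ ^ 2) +
      (‖gradient u 0‖ / u 0) * (‖z‖ / (1 - ‖z‖ ^ 2)))⁻¹ ≤
      u z / u 0 := by
  obtain ⟨F, hFd, hFu, hF₀⟩ := (harmonicOnNhd_of_contDiffOn_of_partials isOpen_ball hreg
    hlap).exists_differentiableOn_ball_re_eq_with_val_at_center
  have h₀ : (0 : ℂ) ∈ ball 0 1 := mem_ball_self one_pos
  have hgrad : ‖gradient u 0‖ = ‖deriv F 0‖ := by
    have hF' := (hFd.differentiableAt (isOpen_ball.mem_nhds h₀)).hasDerivAt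
    rw [(hF'.hasGradientAt_of_re_eventuallyEq
      (eventually_of_mem (isOpen_ball.mem_nhds h₀) hFu)).gradient, norm_conj]
  have hharnack := mul_one_sub_sq_le_re_mul_of_forall_re_pos hFd
    (fun w hw => hFu w hw ▸ hpos w hw) hF₀ hz
  rw [hFu z hz, ← hgrad] at hharnack
  have ha : 0 < u 0 := hpos 0 h₀
  have hr : ‖z‖ ^ 2 < 1 := by nlinarith [mem_ball_zero_iff.mp hz, norm_nonneg z]
  have hsum : (1 + ‖z‖ ^ 2) / (1 - ‖z‖ ^ 2) + ‖gradient u 0‖ / u 0 * (‖z‖ / (1 - ‖z‖ ^ 2)) =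
      (1 + ‖z‖ ^ 2 + ‖gradient u 0‖ / u 0 * ‖z‖) / (1 - ‖z‖ ^ 2) := by ring
  rw [hsum, inv_div, div_le_div_iff₀ (by positivity) ha]
  linarith
end

section
/- Let u : 𝕌 → (0, +∞) be a positive harmonic function on the open unit disc. Then for every z ∈ 𝕌, (1+|z|²)/(1−|z|²) + (|∇u(0)|/u(0)) · |z|/(1−|z|²) ≤ (1+|z|)/(1−|z|). -/
/-!
The real partials of a harmonic `u` on the disc assemble into the holomorphic function
`u_x - i u_y`, so `u = Re F` for some holomorphic `F` with `|F'(0)| = |∇u(0)|`. Schwarz's lemma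
applied to the Cayley transform `(F - F(0)) / (F + conj F(0))` of the positive-real-part function
`F` gives `|∇u(0)| ≤ 2 u(0)`. With this bound the left-hand side is at most
`(1 + 2|z| + |z|²) / (1 - |z|²) = (1 + |z|) / (1 - |z|)`.
-/

open Complex ComplexConjugate Metric Set InnerProductSpace

theorem harmonicOnNhd_of_laplace_eq_zero {u : ℂ → ℝ} {s : Set ℂ} (hs : IsOpen s)
    (hreg : ContDiffOn ℝ 2 u s)
    (hlap : ∀ z ∈ s, fderiv ℝ (fun w => fderiv ℝ u w 1) z 1 +
      fderiv ℝ (fun w => fderiv ℝ u w I) z I = 0) :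
    HarmonicOnNhd u s := by
  intro x hx
  refine ⟨hreg.contDiffAt (hs.mem_nhds hx), ?_⟩
  filter_upwards [hs.mem_nhds hx] with z hz
  have hdiff : DifferentiableAt ℝ (fderiv ℝ u) z :=
    ((hreg.contDiffAt (hs.mem_nhds hz)).fderiv_right (m := 1) le_rfl).differentiableAt
      one_ne_zero
  have hpartial (v : ℂ) :
      fderiv ℝ (fun w => fderiv ℝ u w v) z v = fderiv ℝ (fderiv ℝ u) z v v := by
    rw [fderiv_clm_apply hdiff (differentiableAt_const v)]
    simp
  simpa [laplacian_eq_iteratedFDeriv_complexPlane, iteratedFDeriv_two_apply, ← hpartial]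
    using hlap z hz

theorem HasDerivAt.hasGradientAt_re {F : ℂ → ℂ} {c x : ℂ} (hF : HasDerivAt F c x) :
    HasGradientAt (fun z => (F z).re) (conj c) x := by
  rw [hasGradientAt_iff_hasFDerivAt]
  refine (reCLM.hasFDerivAt.comp x (hF.hasFDerivAt.restrictScalars ℝ)).congr_fderiv ?_
  ext w
  simp [Complex.inner, mul_comm]

theorem norm_sub_lt_norm_add_conj {a b : ℂ} (ha : 0 < a.re) (hb : 0 < b.re) :
    ‖a - b‖ < ‖a + conj b‖ := by
  rw [← sq_lt_sq₀ (norm_nonneg _) (norm_nonneg _), Complex.sq_norm, Complex.sq_norm,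
    normSq_apply, normSq_apply]
  simp only [sub_re, sub_im, add_re, add_im, conj_re, conj_im]
  nlinarith [mul_pos ha hb]

theorem norm_deriv_le_of_re_pos {F : ℂ → ℂ} {c : ℂ} {R : ℝ} (hR : 0 < R)
    (hF : DifferentiableOn ℂ F (ball c R)) (hre : ∀ z ∈ ball c R, 0 < (F z).re) :
    ‖deriv F c‖ ≤ 2 * (F c).re / R := by
  have hc : c ∈ ball c R := mem_ball_self hR
  have hFc := hre c hc
  have hden : ∀ z ∈ ball c R, F z + conj (F c) ≠ 0 := fun z hz h =>
    (norm_nonneg _).not_gt (by simpa [h] using norm_sub_lt_norm_add_conj (hre z hz) hFc)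
  set Φ : ℂ → ℂ := fun z => (F z - F c) / (F z + conj (F c))
  have hΦ : DifferentiableOn ℂ Φ (ball c R) := (hF.sub_const _).div (hF.add_const _) hden
  have hmaps : MapsTo Φ (ball c R) (closedBall (Φ c) 1) := fun z hz => by
    rw [mem_closedBall, dist_eq, show Φ c = 0 by simp [Φ], sub_zero, norm_div,
      div_le_one (norm_pos_iff.2 (hden z hz))]
    exact (norm_sub_lt_norm_add_conj (hre z hz) hFc).le
  have hderiv : deriv Φ c = deriv F c / (2 * (F c).re) := by
    have hFd := (hF.differentiableAt (isOpen_ball.mem_nhds hc)).hasDerivAt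
    have hΦd : HasDerivAt Φ _ c := (hFd.sub_const (F c)).div (hFd.add_const _) (hden c hc)
    have hre0 : ((F c).re : ℂ) ≠ 0 := ofReal_ne_zero.2 hFc.ne'
    rw [hΦd.deriv, add_conj, sub_self, zero_mul, sub_zero]
    push_cast
    field_simp
  have hschwarz := norm_deriv_le_div_of_mapsTo_ball hΦ hmaps hR
  rw [hderiv, norm_div, div_le_div_iff₀ (by simp [hFc.ne']) hR] at hschwarz
  rw [le_div_iff₀ hR]
  simpa [abs_of_pos hFc] using hschwarz

theorem InnerProductSpace.HarmonicOnNhd.norm_gradient_le_of_pos {u : ℂ → ℝ} {c : ℂ} {R : ℝ} (hR : 0 < R)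
    (hu : HarmonicOnNhd u (ball c R)) (hpos : ∀ z ∈ ball c R, 0 < u z) :
    ‖gradient u c‖ ≤ 2 * u c / R := by
  obtain ⟨F, hFan, hFre⟩ := hu.exists_analyticOnNhd_ball_re_eq
  replace hFre : ∀ z ∈ ball c R, (F z).re = u z := fun z hz => hFre hz
  have hc : c ∈ ball c R := mem_ball_self hR
  have hgrad : gradient u c = conj (deriv F c) :=
    ((hFan c hc).differentiableAt.hasDerivAt.hasGradientAt_re.congr_of_eventuallyEq
      (Filter.eventually_of_mem (isOpen_ball.mem_nhds hc) fun z hz => (hFre z hz).symm)).gradient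
  rw [hgrad, norm_conj, ← hFre c hc]
  exact norm_deriv_le_of_re_pos hR hFan.differentiableOn fun z hz => hFre z hz ▸ hpos z hz

theorem one_add_sq_div_add_mul_div_le {a K : ℝ} (ha : 0 ≤ a) (ha1 : a < 1) (hK : K ≤ 2) :
    (1 + a ^ 2) / (1 - a ^ 2) + K * (a / (1 - a ^ 2)) ≤ (1 + a) / (1 - a) := by
  have h1 : 0 < 1 - a := by linarith
  have h2 : 0 < 1 - a ^ 2 := by nlinarith
  rw [mul_div_assoc', ← add_div, div_le_div_iff₀ h2 h1]
  nlinarith [mul_nonneg (mul_nonneg ha (sub_nonneg.2 hK)) h1.le]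

/-- The strengthened Harnack upper bound is at most the classical one. -/
theorem strong_harnack_bound_le_classical (u : ℂ → ℝ)
(hreg : ContDiffOn ℝ 2 u (Metric.ball (0:ℂ) 1))
    (hlap : ∀ z ∈ Metric.ball (0:ℂ) 1,
      fderiv ℝ (fun w => fderiv ℝ u w 1) z 1 +
      fderiv ℝ (fun w => fderiv ℝ u w Complex.I) z Complex.I = 0)
    (hpos : ∀ z ∈ Metric.ball (0:ℂ) 1, 0 < u z)
    (z : ℂ) (hz : z ∈ Metric.ball (0:ℂ) 1) :
    (1 + ‖z‖ ^ 2) / (1 - ‖z‖ ^ 2) +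
      (‖gradient u 0‖ / u 0) * (‖z‖ / (1 - ‖z‖ ^ 2)) ≤
      (1 + ‖z‖) / (1 - ‖z‖) := by
  have hu0 : 0 < u 0 := hpos 0 (mem_ball_self one_pos)
  have hgrad : ‖gradient u 0‖ ≤ 2 * u 0 / 1 :=
    (harmonicOnNhd_of_laplace_eq_zero isOpen_ball hreg hlap).norm_gradient_le_of_pos one_pos hpos
  refine one_add_sq_div_add_mul_div_le (norm_nonneg z) (mem_ball_zero_iff.1 hz) ?_
  rw [div_le_iff₀ hu0]
  linarith
end

section
/- Let 0 ≤ c ≤ 1 and for x ∈ [0,1) set φ_c(x) = (x + c)/(1 + c x). Then for every x ∈ [0,1): Re( (1 + x·φ_c(x)) / (1 − x·φ_c(x)) ) = (1 + x² + 2cx)/(1 − x²) and Re( (1 − x·φ_c(x)) / (1 + x·φ_c(x)) ) = ( (1 + x² + 2cx)/(1 − x²) )⁻¹. In particular, equality holds in both bounds of the strengthened Harnack inequality at real points x for the harmonic functions u₁(z) = Re((1 + zφ_c(z))/(1 − zφ_c(z))) and u₂(z) = Re((1 − zφ_c(z))/(1 + zφ_c(z))), which satisfy u₁(0) = u₂(0)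 = 1 and |∇u₁(0)| = |∇u₂(0)| = 2c. -/
/-!
Along the real diameter `x φ_c(x) = x (x + c)/(1 + c x)` is real, and the Cayley transforms
`(1 ± x φ_c(x))/(1 ∓ x φ_c(x))` simplify to `((1 + x² + 2cx)/(1 - x²))^{±1}` after clearing the
common denominator `1 + c x`. At the origin `z φ_c(z)` vanishes with derivative `φ_c(0) = c`, so
the Cayley transforms have derivative `±2c` there; the gradient of the real part of a holomorphic
function is the conjugate of its complex derivative, which gives `|∇u₁(0)| = |∇u₂(0)| = 2c`.
-/

open Complex ComplexConjugate

theorem HasDerivAt.hasGradientAt_re_s12 {f : ℂ → ℂ} {a z : ℂ} (hf : HasDerivAt f a z) :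
    HasGradientAt (fun w => (f w).re) (conj a) z := by
  rw [hasGradientAt_iff_hasFDerivAt]
  refine (reCLM.hasFDerivAt.comp z (hf.hasFDerivAt.restrictScalars ℝ)).congr_fderiv ?_
  ext v
  simp [InnerProductSpace.toDual_apply_apply, Complex.inner, mul_comm]

section Cayley

variable {𝕜 : Type*} [NontriviallyNormedField 𝕜] {g : 𝕜 → 𝕜} {a z : 𝕜}

theorem HasDerivAt.one_add_div_one_sub (hg : HasDerivAt g a z) (hgz : g z = 0) :
    HasDerivAt (fun w => (1 + g w) / (1 - g w)) (2 * a) z := by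
  refine ((hg.const_add 1).div ((hasDerivAt_const z 1).sub hg) (by simp [hgz])).congr_deriv ?_
  simp only [Pi.sub_apply, hgz]
  ring

theorem HasDerivAt.one_sub_div_one_add (hg : HasDerivAt g a z) (hgz : g z = 0) :
    HasDerivAt (fun w => (1 - g w) / (1 + g w)) (-(2 * a)) z := by
  simpa [sub_eq_add_neg, mul_neg] using hg.neg.one_add_div_one_sub (by simp [hgz])

end Cayley

theorem hasDerivAt_mul_mobius_zero {𝕜 : Type*} [NontriviallyNormedField 𝕜] (c : 𝕜) :
    HasDerivAt (fun z => z * ((z + c) / (1 + c * z))) c 0 := by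
  have hφ : HasDerivAt (fun z => (z + c) / (1 + c * z)) (1 - c * c) 0 :=
    (((hasDerivAt_id (0 : 𝕜)).add_const c).div
      (((hasDerivAt_id (0 : 𝕜)).const_mul c).const_add 1) (by simp)).congr_deriv (by simp)
  exact ((hasDerivAt_id (0 : 𝕜)).mul hφ).congr_deriv (by simp)

theorem one_add_mul_div_one_sub_mul {K : Type*} [Field K] {c x : K} (hcx : 1 + c * x ≠ 0) :
    (1 + x * ((x + c) / (1 + c * x))) / (1 - x * ((x + c) / (1 + c * x))) =
      (1 + x ^ 2 + 2 * c * x) / (1 - x ^ 2) := by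
  rw [mul_div_assoc', one_add_div hcx, one_sub_div hcx, div_div_div_cancel_right₀ hcx]
  ring

theorem sharpness_example_general (c : ℝ) (hc0 : 0 ≤ c)
    (u₁ u₂ : ℂ → ℝ)
    (hu₁ : ∀ z : ℂ, u₁ z =
      ((1 + z * ((z + (c:ℂ)) / (1 + (c:ℂ) * z))) /
        (1 - z * ((z + (c:ℂ)) / (1 + (c:ℂ) * z)))).re)
    (hu₂ : ∀ z : ℂ, u₂ z =
      ((1 - z * ((z + (c:ℂ)) / (1 + (c:ℂ) * z))) /
        (1 + z * ((z + (c:ℂ)) / (1 + (c:ℂ) * z)))).re) :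
    (∀ x : ℝ, 0 ≤ x → x < 1 →
      ((1 + (x:ℂ) * (((x:ℂ) + (c:ℂ)) / (1 + (c:ℂ) * (x:ℂ)))) /
          (1 - (x:ℂ) * (((x:ℂ) + (c:ℂ)) / (1 + (c:ℂ) * (x:ℂ))))).re =
        (1 + x ^ 2 + 2 * c * x) / (1 - x ^ 2) ∧
      (((1 - (x:ℂ) * (((x:ℂ) + (c:ℂ)) / (1 + (c:ℂ) * (x:ℂ)))) /
          (1 + (x:ℂ) * (((x:ℂ) + (c:ℂ)) / (1 + (c:ℂ) * (x:ℂ))))).re =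
        ((1 + x ^ 2 + 2 * c * x) / (1 - x ^ 2))⁻¹)) ∧
    u₁ 0 = 1 ∧ u₂ 0 = 1 ∧
    ‖gradient u₁ 0‖ = 2 * c ∧ ‖gradient u₂ 0‖ = 2 * c := by
  have hcayley (x : ℝ) (hx : 0 ≤ x) :
      (1 + (x:ℂ) * (((x:ℂ) + (c:ℂ)) / (1 + (c:ℂ) * (x:ℂ)))) /
          (1 - (x:ℂ) * (((x:ℂ) + (c:ℂ)) / (1 + (c:ℂ) * (x:ℂ)))) =
        (((1 + x ^ 2 + 2 * c * x) / (1 - x ^ 2) : ℝ) : ℂ) := by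
    have hcx : (1 : ℂ) + c * x ≠ 0 := by exact_mod_cast (by positivity : (0 : ℝ) < 1 + c * x).ne'
    push_cast
    exact one_add_mul_div_one_sub_mul hcx
  have hg := hasDerivAt_mul_mobius_zero (c : ℂ)
  have hg0 : (0 : ℂ) * ((0 + c) / (1 + c * 0)) = 0 := zero_mul _
  have hgrad₁ : gradient u₁ 0 = 2 * c := by
    rw [funext hu₁, ((hg.one_add_div_one_sub hg0).hasGradientAt_re_s12).gradient]
    simp [map_ofNat]
  have hgrad₂ : gradient u₂ 0 = -(2 * c) := by
    rw [funext hu₂, ((hg.one_sub_div_one_add hg0).hasGradientAt_re_s12).gradient]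
    simp [map_ofNat]
  refine ⟨fun x hx _ => ⟨?_, ?_⟩, by simp [hu₁], by simp [hu₂], ?_, ?_⟩
  · rw [hcayley x hx, ofReal_re]
  · rw [← inv_div, hcayley x hx, ← ofReal_inv, ofReal_re]
  · simp [hgrad₁, hc0]
  · simp [hgrad₂, hc0]

/-- Sharpness example: for the harmonic functions
`u₁(z) = Re((1 + zφ_c(z))/(1 - zφ_c(z)))` and
`u₂(z) = Re((1 - zφ_c(z))/(1 + zφ_c(z)))`, where `φ_c(z) = (z+c)/(1+cz)`,
equality holds in both bounds of the strengthened Harnack inequality at real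
points, `u₁ 0 = u₂ 0 = 1`, and the gradients at `0` have norm `2c`. -/
theorem sharpness_example (c : ℝ) (hc0 : 0 ≤ c) (hc1 : c ≤ 1)
    (u₁ u₂ : ℂ → ℝ)
    (hu₁ : ∀ z : ℂ, u₁ z =
      ((1 + z * ((z + (c:ℂ)) / (1 + (c:ℂ) * z))) /
        (1 - z * ((z + (c:ℂ)) / (1 + (c:ℂ) * z)))).re)
    (hu₂ : ∀ z : ℂ, u₂ z =
      ((1 - z * ((z + (c:ℂ)) / (1 + (c:ℂ) * z))) /
        (1 + z * ((z + (c:ℂ)) / (1 + (c:ℂ) * z)))).re) :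
    (∀ x : ℝ, 0 ≤ x → x < 1 →
      ((1 + (x:ℂ) * (((x:ℂ) + (c:ℂ)) / (1 + (c:ℂ) * (x:ℂ)))) /
          (1 - (x:ℂ) * (((x:ℂ) + (c:ℂ)) / (1 + (c:ℂ) * (x:ℂ))))).re =
        (1 + x ^ 2 + 2 * c * x) / (1 - x ^ 2) ∧
      (((1 - (x:ℂ) * (((x:ℂ) + (c:ℂ)) / (1 + (c:ℂ) * (x:ℂ)))) /
          (1 + (x:ℂ) * (((x:ℂ) + (c:ℂ)) / (1 + (c:ℂ) * (x:ℂ))))).re =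
        ((1 + x ^ 2 + 2 * c * x) / (1 - x ^ 2))⁻¹)) ∧
    u₁ 0 = 1 ∧ u₂ 0 = 1 ∧
    ‖gradient u₁ 0‖ = 2 * c ∧ ‖gradient u₂ 0‖ = 2 * c :=
  sharpness_example_general c hc0 u₁ u₂ hu₁ hu₂
end
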